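/- Every non-identity affine involution z ∈ Ĩ_n has at least one visible descent, i.e. there exists i ∈ ℤ with z(i) > z(i+1) and i ≥ z(i+1). -/

import Mathlib

open scoped TensorProduct

/-- Membership in the affine symmetric group `S̃_n`, viewed inside `Equiv.Perm ℤ`. -/
def IsAffine (n : ℕ) (π : Equiv.Perm ℤ) : Prop :=
  (∀ i : ℤ, π (i + n) = π i + n) ∧
  (∑ i ∈ Finset.Icc (1 : ℤ) (n : ℤ), π i) = ∑ i ∈ Finset.Icc (1 : ℤ) (n : ℤ), i

/-- The underlying function of the affine reflection `t_{ij}`. -/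
def affTFun (n : ℕ) (i j k : ℤ) : ℤ :=
  if (k - i) % (n : ℤ) = 0 then k - i + j
  else if (k - j) % (n : ℤ) = 0 then k - j + i
  else k

theorem affTFun_involutive {n : ℕ} {i j : ℤ} (h : ¬ (j - i) % (n : ℤ) = 0) :
    Function.Involutive (affTFun n i j) := by
  have key : ∀ a : ℤ, a % (n : ℤ) = 0 ↔ (n : ℤ) ∣ a :=
    fun a => (@Int.dvd_iff_emod_eq_zero (n : ℤ) a).symm
  rw [key] at h
  intro k
  by_cases h1 : (n : ℤ) ∣ (k - i)
  · have h2 : ¬ (n : ℤ) ∣ (k - i + j - i) := by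
      intro hd
      apply h
      have h5 : j - i = (k - i + j - i) - (k - i) := by ring
      rw [h5]
      exact dvd_sub hd h1
    have h3 : (n : ℤ) ∣ (k - i + j - j) := by
      have h5 : k - i + j - j = k - i := by ring
      rw [h5]; exact h1
    have e1 : affTFun n i j k = k - i + j := by simp [affTFun, key, h1]
    have e2 : affTFun n i j (k - i + j) = k := by
      simp only [affTFun, key]
      rw [if_neg h2, if_pos h3]
      ring
    rw [e1, e2]
  · by_cases h2 : (n : ℤ) ∣ (k - j)
    · have h3 : (n : ℤ) ∣ (k - j + i - i) := by
        have h5 : k - j + i - i = k - j := by ring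
        rw [h5]; exact h2
      have e1 : affTFun n i j k = k - j + i := by simp [affTFun, key, h1, h2]
      have e2 : affTFun n i j (k - j + i) = k := by
        simp only [affTFun, key]
        rw [if_pos h3]
        ring
      rw [e1, e2]
    · have e1 : affTFun n i j k = k := by simp [affTFun, key, h1, h2]
      rw [e1, e1]

/-- The affine reflection `t_{ij}` (interpreted as the identity when `i ≡ j (mod n)`). -/
noncomputable def affT (n : ℕ) (i j : ℤ) : Equiv.Perm ℤ :=
  if h : (j - i) % (n : ℤ) = 0 then 1
  else Function.Involutive.toPerm _ (affTFun_involutive h)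

/-- The simple reflection `s_i = t_{i,i+1}` of `S̃_n`. -/
noncomputable def affS (n : ℕ) (i : ℤ) : Equiv.Perm ℤ := affT n i (i + 1)

/-- Coxeter length: minimal length of a word in the simple reflections `s_1, …, s_n`. -/
noncomputable def wordLength (n : ℕ) (π : Equiv.Perm ℤ) : ℕ :=
  sInf {l : ℕ | ∃ w : List ℤ,
    (∀ x ∈ w, 1 ≤ x ∧ x ≤ (n : ℤ)) ∧ (w.map (affS n)).prod = π ∧ w.length = l}

/-- The set of inversions of `π`, up to the diagonal translation relation. -/
def InvPair (π : Equiv.Perm ℤ) : Type :=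
  {p : ℤ × ℤ // p.1 < p.2 ∧ π p.2 < π p.1}

/-- The number of equivalence classes of inversions of `π` under
`(a,b) ~ (a + mn, b + mn)`. -/
noncomputable def invLength (n : ℕ) (π : Equiv.Perm ℤ) : ℕ :=
  Nat.card (Quot fun p q : InvPair π =>
    ∃ m : ℤ, q.1.1 = p.1.1 + m * n ∧ q.1.2 = p.1.2 + m * n)

/-- Entry `c_i` of the code of an affine permutation. -/
noncomputable def codeEntry (π : Equiv.Perm ℤ) (i : ℤ) : ℕ :=
  Nat.card {j : ℤ // i < j ∧ π j < π i}

/-- Entry `ĉ_i` of the involution code of an affine involution. -/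
noncomputable def icodeEntry (z : Equiv.Perm ℤ) (i : ℤ) : ℕ :=
  Nat.card {j : ℤ // i < j ∧ z j < z i ∧ z j ≤ i}

/-- `ℓ'(z)`: `n` minus the number of orbits of `z` acting on `ℤ/nℤ`. -/
noncomputable def lprime (n : ℕ) (z : Equiv.Perm ℤ) : ℕ :=
  n - Nat.card (Quot fun a b : ZMod n => ((z (a.val : ℤ) : ℤ) : ZMod n) = b)

/-- The characterizing properties of the Demazure (0-Hecke) product on `S̃_n`:
closure, associativity, `s_i ∘ s_i = s_i`, and agreement with the group product
on length-additive factorizations. -/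
def IsDemazure (n : ℕ) (D : Equiv.Perm ℤ → Equiv.Perm ℤ → Equiv.Perm ℤ) : Prop :=
  (∀ a b, IsAffine n a → IsAffine n b → IsAffine n (D a b)) ∧
  (∀ a b c, IsAffine n a → IsAffine n b → IsAffine n c →
    D (D a b) c = D a (D b c)) ∧
  (∀ i : ℤ, D (affS n i) (affS n i) = affS n i) ∧
  (∀ a b, IsAffine n a → IsAffine n b →
    wordLength n (a * b) = wordLength n a + wordLength n b → D a b = a * b)

/-- The set of Hecke atoms `{π : π⁻¹ ∘ π = z}`. -/
def AHecke (n : ℕ) (D : Equiv.Perm ℤ → Equiv.Perm ℤ → Equiv.Perm ℤ)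
    (z : Equiv.Perm ℤ) : Set (Equiv.Perm ℤ) :=
  {π | IsAffine n π ∧ D π⁻¹ π = z}

/-- The set of atoms: minimal-length Hecke atoms. -/
def DemAtoms (n : ℕ) (D : Equiv.Perm ℤ → Equiv.Perm ℤ → Equiv.Perm ℤ)
    (z : Equiv.Perm ℤ) : Set (Equiv.Perm ℤ) :=
  {π | π ∈ AHecke n D z ∧ ∀ σ ∈ AHecke n D z, wordLength n π ≤ wordLength n σ}

/-- The Bruhat covering relation on `S̃_n`. -/
def BruhatCov (n : ℕ) (a b : Equiv.Perm ℤ) : Prop :=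
  (∃ i j : ℤ, i < j ∧ (j - i) % (n : ℤ) ≠ 0 ∧ b = a * affT n i j) ∧
  wordLength n b = wordLength n a + 1

/-- The Bruhat order on `S̃_n`. -/
def BruhatLE (n : ℕ) : Equiv.Perm ℤ → Equiv.Perm ℤ → Prop :=
  Relation.ReflTransGen (BruhatCov n)

/-- The covering relation of the Bruhat order restricted to involutions in `S̃_n`. -/
def BruhatCovI (n : ℕ) (y z : Equiv.Perm ℤ) : Prop :=
  IsAffine n y ∧ IsAffine n z ∧ y⁻¹ = y ∧ z⁻¹ = z ∧
  BruhatLE n y z ∧ y ≠ z ∧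
  ∀ w : Equiv.Perm ℤ, IsAffine n w → w⁻¹ = w →
    BruhatLE n y w → BruhatLE n w z → w = y ∨ w = z

/-- Strict dominance order on partitions (written as weakly decreasing functions). -/
def DomLT (p q : ℕ → ℕ) : Prop :=
  p ≠ q ∧ ∀ k : ℕ, ∑ i ∈ Finset.range k, p i ≤ ∑ i ∈ Finset.range k, q i

/-- The shape `λ(π)`: the transpose of the partition sorting the code of `π⁻¹`,
recorded as the weakly decreasing function `k ↦ λ(π)_{k+1}`. -/
noncomputable def affShape (n : ℕ) (π : Equiv.Perm ℤ) : ℕ → ℕ :=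
  fun k => Multiset.countP (fun x => k < x)
    ((Finset.Icc (1 : ℤ) (n : ℤ)).val.map (codeEntry π⁻¹))

/-- The shape `μ(z)`: the transpose of the partition sorting the involution code of `z`,
recorded as the weakly decreasing function `k ↦ μ(z)_{k+1}`. -/
noncomputable def invShape (n : ℕ) (z : Equiv.Perm ℤ) : ℕ → ℕ :=
  fun k => Multiset.countP (fun x => k < x)
    ((Finset.Icc (1 : ℤ) (n : ℤ)).val.map (icodeEntry z))

/-- The weakly decreasing rearrangement of a multiset of naturals, padded by zeros. -/
noncomputable def rearr (s : Multiset ℕ) : ℕ → ℕ :=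
  fun k => ((s.sort (· ≤ ·)).reverse).getD k 0

/-- Remove the entries of a list of integers that repeat an earlier residue mod `n`. -/
def dedupMod (n : ℕ) : List ℤ → List ℤ
  | [] => []
  | x :: xs => x :: dedupMod n (xs.filter fun y => (y - x) % (n : ℤ) ≠ 0)
termination_by l => l.length
decreasing_by
  first
  | (simp only [List.length_cons, List.length_unattach]
     exact Nat.lt_succ_of_le ((List.length_filter_le _ _).trans_eq List.length_attach))
  | (simp only [List.length_cons, List.length_unattach, List.length_attach]
     exact Nat.lt_succ_of_le (List.length_filter_le _ _))
  | (simp only [List.length_cons]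
     have := List.length_filter_le (fun y => decide ((y - x) % (n : ℤ) ≠ 0)) xs
     simpa [List.length_unattach] using Nat.lt_succ_of_le (le_trans (by simp) this))

/-- The window `[[z(a₁), a₁, z(a₂), a₂, …]]` of `α_min(z)⁻¹`, where `a₁ < a₂ < ⋯`
are the elements `a ∈ [n]` with `a ≤ z(a)`. -/
noncomputable def aminWindow (n : ℕ) (z : Equiv.Perm ℤ) : List ℤ :=
  dedupMod n
    ((((Finset.Icc (1 : ℤ) (n : ℤ)).sort (· ≤ ·)).filter fun a => a ≤ z a).flatMap
      fun a => [z a, a])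

/-- Cyclically decreasing elements of `S̃_n`. -/
def IsCycDec (n : ℕ) (π : Equiv.Perm ℤ) : Prop :=
  ∃ w : List ℤ,
    (∀ x ∈ w, 1 ≤ x ∧ x ≤ (n : ℤ)) ∧ (w.map (affS n)).prod = π ∧
    w.length = wordLength n π ∧
    w.Pairwise fun a b => (a + 1 - b) % (n : ℤ) ≠ 0

/-- The coefficient of the monomial `∏ₖ xₖ₊₁^(α k)` in Lam's affine Stanley symmetric
function `F_π`: the number of length-additive factorizations of `π` into cyclically
decreasing factors of lengths prescribed by `α`. -/
noncomputable def stanleyCoeff (n : ℕ) (π : Equiv.Perm ℤ) (α : ℕ →₀ ℕ) : ℕ :=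
  Nat.card {f : ℕ → Equiv.Perm ℤ //
    (∀ k, IsCycDec n (f k)) ∧ (∀ k, wordLength n (f k) = α k) ∧
    (∑ k ∈ α.support, α k) = wordLength n π ∧
    ∃ N : ℕ, (∀ k, N ≤ k → f k = 1) ∧ ((List.range N).map f).prod = π}

/-- The set `Φ⁻_r(y)` of Bruhat covers of `y` of the form `τⁿ_{i r}(y)` with `i < r`
and `i ∉ {r, y(r)} + nℤ`. -/
def PhiMinus (n : ℕ) (τ : ℤ → ℤ → Equiv.Perm ℤ → Equiv.Perm ℤ)
    (y : Equiv.Perm ℤ) (r : ℤ) : Set (Equiv.Perm ℤ) :=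
  {z | BruhatCovI n y z ∧ ∃ i : ℤ, i < r ∧ (i - r) % (n : ℤ) ≠ 0 ∧
    (i - y r) % (n : ℤ) ≠ 0 ∧ z = τ i r y}

/-- The set `Φ⁺_r(y)` of Bruhat covers of `y` of the form `τⁿ_{r j}(y)` with `r < j`
and `j ∉ {r, y(r)} + nℤ`. -/
def PhiPlus (n : ℕ) (τ : ℤ → ℤ → Equiv.Perm ℤ → Equiv.Perm ℤ)
    (y : Equiv.Perm ℤ) (r : ℤ) : Set (Equiv.Perm ℤ) :=
  {z | BruhatCovI n y z ∧ ∃ j : ℤ, r < j ∧ (j - r) % (n : ℤ) ≠ 0 ∧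
    (j - y r) % (n : ℤ) ≠ 0 ∧ z = τ r j y}

/-- The affine symmetric group as a subtype of `Equiv.Perm ℤ`. -/
abbrev AffPerm (n : ℕ) := {π : Equiv.Perm ℤ // IsAffine n π}

/-- The coproduct `Δ(π) = Σ_{π ≐ π'π''} π' ⊗ π''` on `ℚ S̃_n`. -/
noncomputable def affComul (n : ℕ) :
    (AffPerm n →₀ ℚ) →ₗ[ℚ] TensorProduct ℚ (AffPerm n →₀ ℚ) (AffPerm n →₀ ℚ) :=
  Finsupp.lift _ ℚ _ fun π : AffPerm n =>
    ∑ᶠ p ∈ {p : AffPerm n × AffPerm n |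
        p.1.val * p.2.val = π.val ∧
        wordLength n π.val = wordLength n p.1.val + wordLength n p.2.val},
      (Finsupp.single p.1 (1 : ℚ)) ⊗ₜ[ℚ] (Finsupp.single p.2 (1 : ℚ))

/-!
Suppose an involution `z` of `ℤ` has no visible descent. If `z b < b`, then `z (b - 1) < b - 1`:
otherwise `z b < z (b - 1)` would be a descent at `b - 1`, visible because `z b ≤ b - 1`. So
`{b | z b < b}` is closed downwards. A point `a < z a` then lies below `b = z a`, which satisfies
`z b = a < b`, forcing `z a < a`. Hence `z` moves no point upwards, and, being an involution,
no point at all.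
-/

def NoVisibleDescent (f : ℤ → ℤ) : Prop :=
  ∀ i, f (i + 1) < f i → i < f (i + 1)

namespace NoVisibleDescent

variable {f : ℤ → ℤ}

theorem map_sub_one_lt (hf : Function.Injective f) (h : NoVisibleDescent f) {b : ℤ}
    (hb : f b < b) : f (b - 1) < b - 1 := by
  have hb' := h (b - 1)
  rw [sub_add_cancel] at hb'
  have hne : f (b - 1) ≠ f b := fun heq => by simpa using hf heq
  rcases hne.lt_or_gt with hlt | hgt
  · omega
  · have := hb' hgt
    omega

theorem map_lt_of_le (hf : Function.Injective f) (h : NoVisibleDescent f) {a b : ℤ}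
    (hb : f b < b) (hab : a ≤ b) : f a < a := by
  induction a, hab using Int.leInductionDown with
  | base => exact hb
  | pred a _ ih => exact h.map_sub_one_lt hf ih

theorem eq_self_of_involutive (hf : Function.Involutive f) (h : NoVisibleDescent f) (a : ℤ) :
    f a = a := by
  have map_le : ∀ x, f x ≤ x := fun x => not_lt.mp fun hx =>
    (h.map_lt_of_le hf.injective (b := f x) (by rwa [hf x]) hx.le).not_gt hx
  have le_map := map_le (f a)
  rw [hf a] at le_map
  exact le_antisymm (map_le a) le_map

end NoVisibleDescent

theorem exists_visible_descent_general
    (z : Equiv.Perm ℤ) (hzi : z⁻¹ = z) (hne : z ≠ 1) :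
    ∃ i : ℤ, z (i + 1) < z i ∧ z (i + 1) ≤ i := by
  have hinv : Function.Involutive z := fun x => by
    nth_rewrite 1 [← hzi]
    exact z.symm_apply_apply x
  by_contra hnone
  push Not at hnone
  exact hne (Equiv.ext (NoVisibleDescent.eq_self_of_involutive hinv hnone))

/-- every non-identity affine involution has a visible descent. -/
theorem exists_visible_descent (n : ℕ) (hn : 0 < n)
    (z : Equiv.Perm ℤ) (hz : IsAffine n z) (hzi : z⁻¹ = z) (hne : z ≠ 1) :
    ∃ i : ℤ, z (i + 1) < z i ∧ z (i + 1) ≤ i :=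
  exists_visible_descent_general z hzi hne
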